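/- arXiv:2212.14780 — 4 statements merged into one kernel-verified Lean document; each statement's English description precedes it below -/
import Mathlib

section
/- Let K be a field and let x₁, x₂, x₃, x₄, z ∈ K be pairwise distinct. Then cr(x₁, x₂, x₃, x₄) ≠ 0, 1 + cr(x₁, x₂, x₃, x₄)⁻¹ ≠ 0, and cr(x₁, z, x₂, x₄) = cr(x₁, z, x₂, x₃) · (1 + cr(x₁, x₂, x₃, x₄)⁻¹)⁻¹. -/
/-- The cross ratio of four elements of a field `K`:
`cr x₁ x₂ x₃ x₄ = -((x₁−x₄)·(x₃−x₂)) / ((x₃−x₄)·(x₁−x₂))`. -/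
noncomputable def crossRatio {K : Type*} [Field K] (x₁ x₂ x₃ x₄ : K) : K :=
  -((x₁ - x₄) * (x₃ - x₂)) / ((x₃ - x₄) * (x₁ - x₂))

/-- The algebraic identity behind the flip formula `X_β ↦ X_β(1 + X_κ⁻¹)⁻¹`:
`cr(x₁,z,x₂,x₄) = cr(x₁,z,x₂,x₃) · (1 + cr(x₁,x₂,x₃,x₄)⁻¹)⁻¹`. -/
theorem crossRatio_flip_inv_mul {K : Type*} [Field K] (x₁ x₂ x₃ x₄ z : K)
    (h₁₂ : x₁ ≠ x₂) (h₁₃ : x₁ ≠ x₃) (h₁₄ : x₁ ≠ x₄) (h₁z : x₁ ≠ z)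
    (h₂₃ : x₂ ≠ x₃) (h₂₄ : x₂ ≠ x₄) (h₂z : x₂ ≠ z)
    (h₃₄ : x₃ ≠ x₄) (h₃z : x₃ ≠ z) (h₄z : x₄ ≠ z) :
    crossRatio x₁ x₂ x₃ x₄ ≠ 0 ∧
    1 + (crossRatio x₁ x₂ x₃ x₄)⁻¹ ≠ 0 ∧
    crossRatio x₁ z x₂ x₄ =
      crossRatio x₁ z x₂ x₃ * (1 + (crossRatio x₁ x₂ x₃ x₄)⁻¹)⁻¹ := by
  have d₁₂ : x₁ - x₂ ≠ 0 := sub_ne_zero.mpr h₁₂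
  have d₁₃ : x₁ - x₃ ≠ 0 := sub_ne_zero.mpr h₁₃
  have d₁₄ : x₁ - x₄ ≠ 0 := sub_ne_zero.mpr h₁₄
  have d₂₃ : x₂ - x₃ ≠ 0 := sub_ne_zero.mpr h₂₃
  have d₂₄ : x₂ - x₄ ≠ 0 := sub_ne_zero.mpr h₂₄
  have d₃₄ : x₃ - x₄ ≠ 0 := sub_ne_zero.mpr h₃₄
  have d₃₂ : x₃ - x₂ ≠ 0 := sub_ne_zero.mpr h₂₃.symm
  have d₂₁ : x₂ - x₁ ≠ 0 := sub_ne_zero.mpr h₁₂.symm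
  have dz₁ : z - x₁ ≠ 0 := sub_ne_zero.mpr h₁z.symm
  have dz₂ : x₂ - z ≠ 0 := sub_ne_zero.mpr h₂z
  have hcr : crossRatio x₁ x₂ x₃ x₄ ≠ 0 := by
    unfold crossRatio
    exact div_ne_zero (neg_ne_zero.mpr (mul_ne_zero d₁₄ d₃₂)) (mul_ne_zero d₃₄ d₁₂)
  have key : 1 + (crossRatio x₁ x₂ x₃ x₄)⁻¹ =
      ((x₁ - x₃) * (x₂ - x₄)) / (-((x₁ - x₄) * (x₃ - x₂))) := by
    unfold crossRatio
    field_simp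
    ring
  have hne : 1 + (crossRatio x₁ x₂ x₃ x₄)⁻¹ ≠ 0 := by
    rw [key]
    exact div_ne_zero (mul_ne_zero d₁₃ d₂₄) (neg_ne_zero.mpr (mul_ne_zero d₁₄ d₃₂))
  refine ⟨hcr, hne, ?_⟩
  rw [key]
  unfold crossRatio
  have dz : x₁ - z ≠ 0 := sub_ne_zero.mpr h₁z
  rw [inv_div, div_mul_div_comm,
    div_eq_div_iff (mul_ne_zero d₂₄ dz)
      (mul_ne_zero (mul_ne_zero d₂₃ dz) (mul_ne_zero d₁₃ d₂₄))]
  ring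
end

section
/- Let R be a commutative ring, let M ∈ ℕ, let X₀, …, X_M ∈ R, and let 0 ≤ a ≤ M. Consider the turning pattern τ with τᵢ = L for 1 ≤ i ≤ a and τᵢ = R for a < i ≤ M. Then the (2,2) entry of the product H'(X₀)·E^{τ₁}·H'(X₁)·E^{τ₂}⋯E^{τ_M}·H'(X_M) equals 1. -/
/-- A turning letter `L` or `R`. -/
inductive Turn : Type
  | L : Turn
  | R : Turn

/-- The rescaled diagonal matrix `H'(X) = [[X,0],[0,1]]`. -/
def Hmat {R : Type*} [CommRing R] (X : R) : Matrix (Fin 2) (Fin 2) R :=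
  !![X, 0; 0, 1]

/-- The elementary matrices `E^L = [[1,1],[0,1]]` and `E^R = [[1,0],[1,1]]`. -/
def Emat {R : Type*} [CommRing R] : Turn → Matrix (Fin 2) (Fin 2) R
  | Turn.L => !![1, 1; 0, 1]
  | Turn.R => !![1, 0; 1, 1]

/-- The rescaled Wilson line matrix
`P(τ;X) = H'(X₀)·E^{τ₁}·H'(X₁)·E^{τ₂}⋯E^{τ_M}·H'(X_M)`. -/
def wilsonP {R : Type*} [CommRing R] {M : ℕ} (τ : Fin M → Turn)
    (X : Fin (M + 1) → R) : Matrix (Fin 2) (Fin 2) R :=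
  Hmat (X 0) * (List.ofFn fun i : Fin M => Emat (τ i) * Hmat (X i.succ)).prod

/-!
Row `1` of `H'(X)` and of `E^L` is `(0, 1)`, and column `1` of `H'(X)` and of `E^R` is `(0, 1)ᵀ`.
Each of these two conditions is preserved under multiplication, so for the pattern
`L,…,L,R,…,R` the Wilson line matrix factors as `U * V` with row `1` of `U` and column `1` of `V`
equal to those of the identity; hence `(U * V) 1 1 = 1`.
-/

namespace Matrix

variable {n α : Type*} [Fintype n] [DecidableEq n] [Semiring α]

theorem mul_row_eq_of_row_eq_one {A : Matrix n n α} {i : n} (hA : A i = (1 : Matrix n n α) i)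
    (B : Matrix n n α) : (A * B) i = B i := by
  ext j
  simp [mul_apply, congrFun hA, one_apply]

theorem mul_col_eq_of_col_eq_one {B : Matrix n n α} {i : n}
    (hB : ∀ k, B k i = (1 : Matrix n n α) k i) (A : Matrix n n α) (k : n) :
    (A * B) k i = A k i := by
  simp [mul_apply, hB, one_apply]

variable (α) in
def rowOneSubmonoid (i : n) : Submonoid (Matrix n n α) where
  carrier := {A | A i = (1 : Matrix n n α) i}
  mul_mem' {_ B} hA hB := (mul_row_eq_of_row_eq_one hA B).trans hB
  one_mem' := rfl

variable (α) in
def colOneSubmonoid (i : n) : Submonoid (Matrix n n α) where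
  carrier := {B | ∀ k, B k i = (1 : Matrix n n α) k i}
  mul_mem' {A _} hA hB k := (mul_col_eq_of_col_eq_one hB A k).trans (hA k)
  one_mem' _ := rfl

theorem mul_apply_self_eq_one {A B : Matrix n n α} {i : n} (hA : A ∈ rowOneSubmonoid α i)
    (hB : B ∈ colOneSubmonoid α i) : (A * B) i i = 1 := by
  rw [mul_row_eq_of_row_eq_one hA, hB, one_apply_eq]

end Matrix

open Pointwise in
theorem List.prod_ofFn_mem_mul {G : Type*} [Monoid G] {s t : Submonoid G} {m : ℕ}
    (f : Fin m → G) (a : ℕ) (hs : ∀ i : Fin m, (i : ℕ) < a → f i ∈ s)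
    (ht : ∀ i : Fin m, a ≤ i → f i ∈ t) :
    (List.ofFn f).prod ∈ (s : Set G) * t := by
  refine ⟨_, s.list_prod_mem fun x hx => ?_, _, t.list_prod_mem fun y hy => ?_,
    (List.ofFn f).prod_take_mul_prod_drop a⟩
  · obtain ⟨j, hj, rfl⟩ := List.mem_take_iff_getElem.mp hx
    simp only [List.getElem_ofFn]
    exact hs _ (lt_of_lt_of_le hj (min_le_left _ _))
  · obtain ⟨j, hj, rfl⟩ := List.mem_drop_iff_getElem.mp hy
    simp only [List.getElem_ofFn]
    exact ht _ (by simp)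

open Matrix

section

variable {R : Type*} [CommRing R]

theorem Hmat_mem_rowOneSubmonoid (X : R) : Hmat X ∈ rowOneSubmonoid R 1 := by
  ext j; fin_cases j <;> simp [Hmat, one_apply]

theorem Hmat_mem_colOneSubmonoid (X : R) : Hmat X ∈ colOneSubmonoid R 1 := by
  intro k; fin_cases k <;> simp [Hmat, one_apply]

theorem Emat_L_mem_rowOneSubmonoid : Emat Turn.L ∈ rowOneSubmonoid R 1 := by
  ext j; fin_cases j <;> simp [Emat, one_apply]

theorem Emat_R_mem_colOneSubmonoid : Emat Turn.R ∈ colOneSubmonoid R 1 := by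
  intro k; fin_cases k <;> simp [Emat, one_apply]

end

theorem wilsonP_entry22_of_LR_pattern_general {R : Type*} [CommRing R] (M a : ℕ)
    (X : Fin (M + 1) → R) :
    wilsonP (fun i : Fin M => if (i : ℕ) < a then Turn.L else Turn.R) X 1 1 = 1 := by
  obtain ⟨x, hx, y, hy, hxy⟩ := List.prod_ofFn_mem_mul
    (s := rowOneSubmonoid R 1) (t := colOneSubmonoid R 1)
    (fun i : Fin M => Emat (if (i : ℕ) < a then Turn.L else Turn.R) * Hmat (X i.succ)) a
    (fun i hi => by
      rw [if_pos hi]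
      exact mul_mem Emat_L_mem_rowOneSubmonoid (Hmat_mem_rowOneSubmonoid _))
    (fun i hi => by
      rw [if_neg hi.not_gt]
      exact mul_mem Emat_R_mem_colOneSubmonoid (Hmat_mem_colOneSubmonoid _))
  rw [wilsonP, ← hxy, ← mul_assoc]
  exact mul_apply_self_eq_one (mul_mem (Hmat_mem_rowOneSubmonoid _) hx) hy

/-- For the turning pattern `L,…,L,R,…,R` (first `a` letters `L`, the rest `R`),
the `(2,2)` entry of the rescaled Wilson line matrix equals `1`. -/
theorem wilsonP_entry22_of_LR_pattern {R : Type*} [CommRing R] (M a : ℕ)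
    (ha : a ≤ M) (X : Fin (M + 1) → R) :
    wilsonP (fun i : Fin M => if (i : ℕ) < a then Turn.L else Turn.R) X 1 1 = 1 :=
  wilsonP_entry22_of_LR_pattern_general M a X
end

section
/- Fix n ≥ 1 and a turning pattern τ = (τ₁,…,τ_n) ∈ {L,R}^n. Over the multivariate polynomial ring ℤ[Y₁, …, Y_n], the trace of the product H'(Y₁)·E^{τ₁}·H'(Y₂)·E^{τ₂}⋯H'(Y_n)·E^{τ_n} is a polynomial whose constant coefficient equals 1. -/
/-!
Taking constant coefficients is the ring map `Y ↦ 0`, which commutes with products and traces,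
so it sends the monodromy to the product of the integer matrices `H'(0)·E^τ = [[0,0],[a,1]]`.
These satisfy `M·N = N`, so a nonempty product of them equals its last factor, whose trace is `1`.
-/

theorem List.prod_eq_getLast_of_mul_eq_right {M : Type*} [Monoid M] :
    ∀ (l : List M) (hl : l ≠ []), (∀ x ∈ l, ∀ y ∈ l, x * y = y) → l.prod = l.getLast hl
  | [a], _, _ => by simp
  | a :: b :: t, _, h => by
    have ht := List.prod_eq_getLast_of_mul_eq_right (b :: t) (List.cons_ne_nil b t)
      fun x hx y hy => h x (List.mem_cons_of_mem a hx) y (List.mem_cons_of_mem a hy)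
    rw [List.prod_cons, ht, List.getLast_cons (List.cons_ne_nil b t)]
    exact h _ List.mem_cons_self _ (List.mem_cons_of_mem a (List.getLast_mem _))

theorem Matrix.topRowZero_mul_topRowZero {R : Type*} [NonAssocSemiring R] (a b : R) :
    !![0, 0; a, 1] * !![0, 0; b, 1] = !![0, 0; b, 1] := by
  rw [Matrix.mul_fin_two]
  norm_num

theorem Hmat_zero_mul_Emat {R : Type*} [CommRing R] (t : Turn) :
    ∃ a : R, Hmat 0 * Emat t = !![0, 0; a, 1] := by
  cases t
  · exact ⟨0, by rw [Hmat, Emat, Matrix.mul_fin_two]; norm_num⟩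
  · exact ⟨1, by rw [Hmat, Emat, Matrix.mul_fin_two]; norm_num⟩

theorem Hmat_map {R S : Type*} [CommRing R] [CommRing S] (f : R →+* S) (X : R) :
    (Hmat X).map f = Hmat (f X) := by
  ext i j
  fin_cases i <;> fin_cases j <;> simp [Hmat]

theorem Emat_map {R S : Type*} [CommRing R] [CommRing S] (f : R →+* S) (t : Turn) :
    (Emat t).map f = Emat t := by
  cases t <;> ext i j <;> fin_cases i <;> fin_cases j <;> simp [Emat]

theorem trace_prod_Hmat_zero_mul_Emat {R : Type*} [CommRing R] (l : List Turn) (hl : l ≠ []) :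
    ((l.map fun t => Hmat (0 : R) * Emat t).prod).trace = 1 := by
  have hne : (l.map fun t => Hmat (0 : R) * Emat t) ≠ [] := by simpa using hl
  have hform : ∀ M ∈ l.map fun t => Hmat (0 : R) * Emat t, ∃ a : R, M = !![0, 0; a, 1] := by
    simp only [List.mem_map]
    rintro M ⟨t, -, rfl⟩
    exact Hmat_zero_mul_Emat t
  rw [List.prod_eq_getLast_of_mul_eq_right _ hne ?_]
  · obtain ⟨a, ha⟩ := hform _ (List.getLast_mem hne)
    simp [ha, Matrix.trace_fin_two]
  · intro M hM N hN
    obtain ⟨a, rfl⟩ := hform M hM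
    obtain ⟨b, rfl⟩ := hform N hN
    exact Matrix.topRowZero_mul_topRowZero a b

/-- Over `ℤ[Y₁,…,Y_n]`, the trace of `H'(Y₁)·E^{τ₁}·H'(Y₂)·E^{τ₂}⋯H'(Y_n)·E^{τ_n}`
is a polynomial with constant coefficient `1`. -/
theorem trace_monodromy_constantCoeff (n : ℕ) (hn : 1 ≤ n) (τ : Fin n → Turn) :
    MvPolynomial.constantCoeff
      (Matrix.trace
        ((List.ofFn fun i : Fin n =>
          Hmat (MvPolynomial.X i : MvPolynomial (Fin n) ℤ) * Emat (τ i)).prod)) = 1 := by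
  set φ : MvPolynomial (Fin n) ℤ →+* ℤ := MvPolynomial.constantCoeff
  have hne : List.ofFn τ ≠ [] := by
    rw [ne_eq, List.ofFn_eq_nil_iff]
    omega
  calc φ (Matrix.trace _)
      = Matrix.trace (φ.mapMatrix _) := AddMonoidHom.map_trace φ _
    _ = ((List.ofFn τ).map fun t => Hmat (0 : ℤ) * Emat t).prod.trace := by
      simp only [map_list_prod, List.map_ofFn, Function.comp_def, RingHom.mapMatrix_apply,
        Matrix.map_mul, Hmat_map, Emat_map, MvPolynomial.constantCoeff_X, φ]
    _ = 1 := trace_prod_Hmat_zero_mul_Emat _ hne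
end

section
/- Equip ℝ³ with the Minkowski bilinear form B(x,y) := x₁y₁ + x₂y₂ − x₃y₃ of signature (2,1). Let u := (−1/√2, 0, 1/√2), v := (1/√2, 0, 1/√2), w := (0, −√2, √2). Then: (i) B(u,u) = B(v,v) = B(w,w) = 0 and B(u,v) = B(v,w) = B(w,u) = −1; (ii) for all real a, b, k > 0, setting u' := (b·k/a)·u, v' := (a·k/b)·v, w' := (a·b/k)·w, one has −B(u',v') = k², −B(v',w') = a², −B(w',u') = b²; (iii) the vector x := (1/√2)·(b/(k·a))·u + (1/√2)·(k·a/b)·v satisfies B(x,x) = −1 and x₃ > 0, satisfies B(x, v') = −1/√2, and satisfies B(x, (u − v)/√2) = (1/2)·(b/(k·a) − k·a/b) = sinh(log(b/(k·a))). -/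
open Real

/-- The Minkowski bilinear form of signature `(2,1)` on `ℝ³`:
`B(x,y) = x₁y₁ + x₂y₂ − x₃y₃`. -/
def mink (x y : Fin 3 → ℝ) : ℝ := x 0 * y 0 + x 1 * y 1 - x 2 * y 2

/-- The lightlike vector `u = (−1/√2, 0, 1/√2)`. -/
noncomputable def uVec : Fin 3 → ℝ := ![-(1 / Real.sqrt 2), 0, 1 / Real.sqrt 2]

/-- The lightlike vector `v = (1/√2, 0, 1/√2)`. -/
noncomputable def vVec : Fin 3 → ℝ := ![1 / Real.sqrt 2, 0, 1 / Real.sqrt 2]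

/-- The lightlike vector `w = (0, −√2, √2)`. -/
noncomputable def wVec : Fin 3 → ℝ := ![0, -(Real.sqrt 2), Real.sqrt 2]

/-- The hyperboloid-model computation behind the ensemble map formula on a boundary
interval: properties of the light-cone basis `u, v, w`, the rescaled horocycles
`u', v', w'` with λ-lengths `k, a, b`, and the point `x` with
`sinh d(x, n^⊥) = (1/2)(b/(ka) − ka/b)`. -/
theorem ensemble_hyperboloid_computation (a b k : ℝ)
    (ha : 0 < a) (hb : 0 < b) (hk : 0 < k) :
    let u' : Fin 3 → ℝ := (b * k / a) • uVec
    let v' : Fin 3 → ℝ := (a * k / b) • vVec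
    let w' : Fin 3 → ℝ := (a * b / k) • wVec
    let x : Fin 3 → ℝ :=
      ((1 / Real.sqrt 2) * (b / (k * a))) • uVec + ((1 / Real.sqrt 2) * (k * a / b)) • vVec
    -- (i) light-cone basis relations
    (mink uVec uVec = 0 ∧ mink vVec vVec = 0 ∧ mink wVec wVec = 0 ∧
      mink uVec vVec = -1 ∧ mink vVec wVec = -1 ∧ mink wVec uVec = -1) ∧
    -- (ii) λ-lengths of the rescaled horocycles
    (-mink u' v' = k ^ 2 ∧ -mink v' w' = a ^ 2 ∧ -mink w' u' = b ^ 2) ∧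
    -- (iii) the point `x`
    (mink x x = -1 ∧ 0 < x 2 ∧ mink x v' = -(1 / Real.sqrt 2) ∧
      mink x ((1 / Real.sqrt 2) • (uVec - vVec)) = (1 / 2) * (b / (k * a) - k * a / b) ∧
      (1 / 2) * (b / (k * a) - k * a / b) = Real.sinh (Real.log (b / (k * a)))) := by
  have h2 : Real.sqrt 2 ^ 2 = 2 := Real.sq_sqrt (by norm_num)
  have h2pos : (0:ℝ) < Real.sqrt 2 := Real.sqrt_pos.mpr (by norm_num)
  intro u' v' w' x
  simp only [u', v', w', x, mink, uVec, vVec, wVec, Pi.add_apply, Pi.smul_apply,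
    Pi.sub_apply, Matrix.cons_val_zero, Matrix.cons_val_one, Matrix.head_cons,
    Matrix.cons_val_two, Matrix.tail_cons, smul_eq_mul]
  have h4 : Real.sqrt 2 ^ 4 = 4 := by nlinarith
  have h3 : Real.sqrt 2 ^ 3 = 2 * Real.sqrt 2 := by nlinarith
  have h5 : Real.sqrt 2 ^ 5 = 4 * Real.sqrt 2 := by nlinarith
  have h8 : Real.sqrt 2 ^ 8 = 16 := by nlinarith
  refine ⟨⟨by ring, by ring, by nlinarith, ?_, ?_, ?_⟩, ⟨?_, ?_, ?_⟩, ?_, ?_, ?_, ?_, ?_⟩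
  · field_simp <;> nlinarith
  · field_simp <;> nlinarith
  · field_simp <;> nlinarith
  · field_simp <;> ring_nf <;> (try simp only [h2, h3, h4, h5, h8]) <;> (try ring)
  · field_simp <;> ring_nf <;> (try simp only [h2, h3, h4, h5, h8]) <;> (try ring)
  · field_simp <;> ring_nf <;> (try simp only [h2, h3, h4, h5, h8]) <;> (try ring)
  · field_simp <;> ring_nf <;> (try simp only [h2, h3, h4, h5, h8]) <;> (try ring)
  · positivity
  · field_simp <;> ring_nf <;> (try simp only [h2, h3, h4, h5, h8]) <;> (try ring)
  · field_simp <;> ring_nf <;> (try simp only [h2, h3, h4, h5, h8]) <;> (try ring)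
  · rw [Real.sinh_eq, Real.exp_log (by positivity)]
    rw [show -Real.log (b / (k * a)) = Real.log (k * a / b) from by
      rw [← Real.log_inv]; congr 1; field_simp]
    rw [Real.exp_log (by positivity)]; ring
end
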